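/- Let Ω be a q-closed sesquilinear form on D with respect to a norm ‖·‖_Ω. If there exists a bounded sesquilinear form Υ on H such that Ω+Υ is coercive on D[‖·‖_Ω], i.e., |(Ω+Υ)(ξ,ξ)| ≥ γ‖ξ‖_Ω² for all ξ ∈ D and some γ > 0, then Υ ∈ P₀(Ω) and Ω is solvable with respect to ‖·‖_Ω. -/

import Mathlib

noncomputable section

open Filter Topology Function
open scoped InnerProductSpace

namespace Paper

variable {V : Type} [AddCommGroup V] [Module ℂ V]

/-- `n` is a norm on the complex vector space `V`. -/
def IsNormFn (n : V → ℝ) : Prop :=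
  (∀ x : V, n x = 0 ↔ x = 0) ∧
    (∀ (c : ℂ) (x : V), n (c • x) = ‖c‖ * n x) ∧
      ∀ x y : V, n (x + y) ≤ n x + n y

/-- `ξ` is a Cauchy sequence with respect to the norm `n`. -/
def IsCauchyWrt (n : V → ℝ) (ξ : ℕ → V) : Prop :=
  ∀ ε : ℝ, 0 < ε → ∃ N : ℕ, ∀ p q : ℕ, N ≤ p → N ≤ q → n (ξ p - ξ q) < ε

/-- `ξ` tends to `x` with respect to the norm `n`. -/
def TendstoWrt (n : V → ℝ) (ξ : ℕ → V) (x : V) : Prop :=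
  Tendsto (fun k => n (ξ k - x)) atTop (𝓝 0)

/-- `V` is complete with respect to the norm `n`. -/
def CompleteWrt (n : V → ℝ) : Prop :=
  ∀ ξ : ℕ → V, IsCauchyWrt n ξ → ∃ x : V, TendstoWrt n ξ x

/-- The two norms `n₁` and `n₂` are equivalent. -/
def EquivNorms (n₁ n₂ : V → ℝ) : Prop :=
  ∃ c₁ : ℝ, 0 < c₁ ∧ ∃ c₂ : ℝ, 0 < c₂ ∧ ∀ x : V, n₁ x ≤ c₁ * n₂ x ∧ n₂ x ≤ c₂ * n₁ x

/-- `Ω` is a sesquilinear form: linear in the first entry, conjugate-linear in the second. -/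
def IsSesq (Ω : V → V → ℂ) : Prop :=
  (∀ η : V, IsLinearMap ℂ fun ξ => Ω ξ η) ∧
    ∀ ξ : V, IsLinearMap ℂ fun η => (starRingEnd ℂ) (Ω ξ η)

/-- `T` is a positive form: `T(ξ,ξ) ≥ 0` for every `ξ`. -/
def IsPositiveForm (T : V → V → ℂ) : Prop :=
  ∀ x : V, (T x x).im = 0 ∧ 0 ≤ (T x x).re

/-- The norm `n` is compatible with the positive sesquilinear form `T`. -/
def CompatibleWithForm (T : V → V → ℂ) (n : V → ℝ) : Prop :=
  (∃ α : ℝ, 0 < α ∧ ∀ ξ : V, (T ξ ξ).re ≤ α * n ξ ^ 2) ∧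
    ∀ ξ : ℕ → V, Tendsto (fun k => (T (ξ k) (ξ k)).re) atTop (𝓝 0) →
      IsCauchyWrt n ξ → Tendsto (fun k => n (ξ k)) atTop (𝓝 0)

/-- A realization of `(V, n)` as a dense subspace of a reflexive Banach space `E`. -/
structure BanachModel (V : Type) [AddCommGroup V] [Module ℂ V] (n : V → ℝ) : Type 1 where
  E : Type
  [instGroup : NormedAddCommGroup E]
  [instSpace : NormedSpace ℂ E]
  [instComplete : CompleteSpace E]
  j : V →ₗ[ℂ] E
  isometry : ∀ x : V, ‖j x‖ = n x
  dense : DenseRange j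
  reflexive : Surjective (NormedSpace.inclusionInDoubleDual ℂ E)

/-- `V` endowed with the norm `n` is a reflexive Banach space. -/
def IsReflexiveBanachWrt (n : V → ℝ) : Prop :=
  ∃ M : BanachModel V n, Surjective M.j

/-- The completion of `V` with respect to the norm `n` is a reflexive Banach space. -/
def CompletionIsReflexiveBanach (n : V → ℝ) : Prop :=
  Nonempty (BanachModel V n)

variable {H : Type} [NormedAddCommGroup H] [InnerProductSpace ℂ H]

/-- The embedding of `D[n]` into `H` is continuous. -/
def EmbedsContinuously (D : Submodule ℂ H) (n : D → ℝ) : Prop :=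
  ∃ α : ℝ, 0 < α ∧ ∀ ξ : D, ‖(ξ : H)‖ ≤ α * n ξ

/-- The norm `n` on `D` is compatible with the inner product of `H`. -/
def CompatibleWithInner (D : Submodule ℂ H) (n : D → ℝ) : Prop :=
  EmbedsContinuously D n ∧
    ∀ ξ : ℕ → D, Tendsto (fun k => ‖(ξ k : H)‖) atTop (𝓝 0) →
      IsCauchyWrt n ξ → Tendsto (fun k => n (ξ k)) atTop (𝓝 0)

/-- The form `Ω` is bounded on `D[n]`. -/
def BoundedOn (D : Submodule ℂ H) (Ω : D → D → ℂ) (n : D → ℝ) : Prop :=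
  ∃ β : ℝ, 0 < β ∧ ∀ ξ η : D, ‖Ω ξ η‖ ≤ β * n ξ * n η

/-- `Ω` is q-closed with respect to the norm `n` (Definition 5.2 of Di Bella–Trapani). -/
def IsQClosed (D : Submodule ℂ H) (Ω : D → D → ℂ) (n : D → ℝ) : Prop :=
  IsNormFn n ∧ CompatibleWithInner D n ∧ IsReflexiveBanachWrt n ∧ BoundedOn D Ω n

/-- `Ω` is q-closable with respect to the norm `n`. -/
def IsQClosable (D : Submodule ℂ H) (Ω : D → D → ℂ) (n : D → ℝ) : Prop :=
  IsNormFn n ∧ CompatibleWithInner D n ∧ CompletionIsReflexiveBanach n ∧ BoundedOn D Ω n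

/-- `Λ` is a bounded conjugate-linear functional on `D[n]`,
i.e. an element of the conjugate dual of `D[n]`. -/
def MemConjDual (D : Submodule ℂ H) (n : D → ℝ) (Λ : D → ℂ) : Prop :=
  (∀ x y : D, Λ (x + y) = Λ x + Λ y) ∧
    (∀ (c : ℂ) (x : D), Λ (c • x) = (starRingEnd ℂ) c * Λ x) ∧
      ∃ C : ℝ, ∀ x : D, ‖Λ x‖ ≤ C * n x

/-- `Υ` is a bounded sesquilinear form on `H`. -/
def IsBoundedForm (Υ : H → H → ℂ) : Prop :=
  IsSesq Υ ∧ ∃ C : ℝ, ∀ x y : H, ‖Υ x y‖ ≤ C * ‖x‖ * ‖y‖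

/-- `Υ ∈ P₀(Ω)`: `N(Ω+Υ) = {0}` and every element of the conjugate dual of `D[n]`
is represented by `Ω+Υ`. -/
def InP0 (D : Submodule ℂ H) (Ω : D → D → ℂ) (n : D → ℝ) (Υ : H → H → ℂ) : Prop :=
  (∀ ξ : D, (∀ η : D, Ω ξ η + Υ ↑ξ ↑η = 0) → ξ = 0) ∧
    ∀ Λ : D → ℂ, MemConjDual D n Λ → ∃ ξ : D, ∀ η : D, Λ η = Ω ξ η + Υ ↑ξ ↑η

/-- `Ω` is solvable with respect to the norm `n`. -/
def IsSolvable (D : Submodule ℂ H) (Ω : D → D → ℂ) (n : D → ℝ) : Prop :=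
  IsQClosed D Ω n ∧ ∃ Υ : H → H → ℂ, IsBoundedForm Υ ∧ InP0 D Ω n Υ

/-- The numerical range of a form on `D`. -/
def NumRangeForm (D : Submodule ℂ H) (Ω : D → D → ℂ) : Set ℂ :=
  {z : ℂ | ∃ ξ : D, ‖(ξ : H)‖ = 1 ∧ z = Ω ξ ξ}

/-- The numerical range of a form on `H`. -/
def NumRangeFormH (Υ : H → H → ℂ) : Set ℂ :=
  {z : ℂ | ∃ x : H, ‖x‖ = 1 ∧ z = Υ x x}

/-- `sup { |Θ(ξ,η)| : ‖η‖_Ω = 1 }`. -/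
def FormSup (D : Submodule ℂ H) (Θ : D → D → ℂ) (n : D → ℝ) (ξ : D) : ℝ :=
  sSup {r : ℝ | ∃ η : D, n η = 1 ∧ r = ‖Θ ξ η‖}

end Paper

/-!
Transported along `D[‖·‖_Ω] ≅ E`, the form `Ω + Υ` becomes a bounded sesquilinear form on a
reflexive Banach space `E` (bounded because `‖ξ‖ ≤ α ‖ξ‖_Ω`), and `x ↦ conj (Ω + Υ)(x, ·)` is a
conjugate-linear operator `T : E → E*`. Coercivity gives `γ ‖x‖ ≤ ‖T x‖`, so `T` is injective
with closed range. By reflexivity a functional on `E*` annihilating the range of `T` is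
evaluation at some `x`; it kills `T x`, so `(Ω + Υ)(x, x) = 0` and `x = 0`. Hahn–Banach then makes
`T` surjective, which is the representation property in `P₀(Ω)`.
-/

open scoped ComplexConjugate

section LaxMilgram

variable {𝕜 F : Type*} [RCLike 𝕜] [NormedAddCommGroup F] [NormedSpace 𝕜 F]

theorem Submodule.eq_top_of_forall_dual_eq_zero (S : Submodule 𝕜 F) [IsClosed (S : Set F)]
    (h : ∀ φ : StrongDual 𝕜 F, (∀ x ∈ S, φ x = 0) → φ = 0) : S = ⊤ := by
  refine eq_top_iff'.2 fun x => by_contra fun hx => ?_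
  obtain ⟨g, hg⟩ :=
    SeparatingDual.exists_ne_zero (R := 𝕜) (mt (Submodule.Quotient.mk_eq_zero S).1 hx)
  have hgS : g.comp S.mkQL = 0 :=
    h _ fun y hy => by simp [(Submodule.Quotient.mk_eq_zero S).2 hy]
  exact hg (by simpa using DFunLike.congr_fun hgS x)

theorem eq_zero_of_mul_sq_nonpos {γ a : ℝ} (hγ : 0 < γ) (h : γ * a ^ 2 ≤ 0) : a = 0 :=
  pow_eq_zero_iff two_ne_zero |>.1 <| le_antisymm (nonpos_of_mul_nonpos_right h hγ) (sq_nonneg a)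

theorem ContinuousLinearMap.mul_norm_le_norm_apply_of_coercive {σ : 𝕜 →+* 𝕜}
    (T : F →SL[σ] StrongDual 𝕜 F) {γ : ℝ} (hT : ∀ x, γ * ‖x‖ ^ 2 ≤ ‖T x x‖) (x : F) :
    γ * ‖x‖ ≤ ‖T x‖ := by
  rcases (norm_nonneg x).eq_or_lt with hx | hx
  · simp [← hx]
  · refine le_of_mul_le_mul_right ?_ hx
    calc γ * ‖x‖ * ‖x‖ = γ * ‖x‖ ^ 2 := by ring
      _ ≤ ‖T x x‖ := hT x
      _ ≤ ‖T x‖ * ‖x‖ := (T x).le_opNorm x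

theorem ContinuousLinearMap.surjective_of_coercive [CompleteSpace F]
    (hrefl : Surjective (NormedSpace.inclusionInDoubleDual 𝕜 F))
    (T : F →SL[starRingEnd 𝕜] StrongDual 𝕜 F) {γ : ℝ} (hγ : 0 < γ)
    (hT : ∀ x, γ * ‖x‖ ^ 2 ≤ ‖T x x‖) : Surjective T := by
  have hanti : AntilipschitzWith ⟨γ⁻¹, by positivity⟩ T :=
    T.antilipschitz_of_bound fun x => by
      change ‖x‖ ≤ γ⁻¹ * ‖T x‖
      rw [inv_mul_eq_div, le_div_iff₀' hγ]
      exact T.mul_norm_le_norm_apply_of_coercive hT x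
  set R := LinearMap.range (T : F →ₗ⋆[𝕜] StrongDual 𝕜 F)
  have : IsClosed (R : Set (StrongDual 𝕜 F)) := by
    rw [LinearMap.coe_range]
    exact hanti.isClosed_range T.uniformContinuous
  have hR : R = ⊤ := R.eq_top_of_forall_dual_eq_zero fun φ hφ => by
    obtain ⟨x, rfl⟩ := hrefl φ
    have hx : T x x = 0 := hφ (T x) ⟨x, rfl⟩
    have : x = 0 := norm_eq_zero.1 <| eq_zero_of_mul_sq_nonpos hγ (by simpa [hx] using hT x)
    simp [this]
  exact LinearMap.range_eq_top.1 hR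

end LaxMilgram

namespace Paper

section Forms

variable {V W : Type} [AddCommGroup V] [Module ℂ V] [AddCommGroup W] [Module ℂ W]

theorem IsSesq.add {B₁ B₂ : V → V → ℂ} (h₁ : IsSesq B₁) (h₂ : IsSesq B₂) :
    IsSesq (B₁ + B₂) :=
  ⟨fun η => (IsLinearMap.mk' _ (h₁.1 η) + IsLinearMap.mk' _ (h₂.1 η)).isLinear,
    fun ξ => by
      simp only [Pi.add_apply, map_add]
      exact (IsLinearMap.mk' _ (h₁.2 ξ) + IsLinearMap.mk' _ (h₂.2 ξ)).isLinear⟩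

theorem IsSesq.comp {B : V → V → ℂ} (hB : IsSesq B) (f : W →ₗ[ℂ] V) :
    IsSesq fun x y => B (f x) (f y) :=
  ⟨fun y => ((IsLinearMap.mk' _ (hB.1 (f y))).comp f).isLinear,
    fun x => ((IsLinearMap.mk' _ (hB.2 (f x))).comp f).isLinear⟩

end Forms

theorem exists_forall_eq_of_coercive {E : Type} [NormedAddCommGroup E] [NormedSpace ℂ E]
    [CompleteSpace E] (hrefl : Surjective (NormedSpace.inclusionInDoubleDual ℂ E))
    {B : E → E → ℂ} (hB : IsSesq B) {K : ℝ} (hK : ∀ x y, ‖B x y‖ ≤ K * ‖x‖ * ‖y‖)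
    {γ : ℝ} (hγ : 0 < γ) (hcoer : ∀ x, γ * ‖x‖ ^ 2 ≤ ‖B x x‖)
    {Λ : E → ℂ} (hadd : ∀ x y, Λ (x + y) = Λ x + Λ y)
    (hsmul : ∀ (c : ℂ) x, Λ (c • x) = conj c * Λ x)
    {C : ℝ} (hΛ : ∀ x, ‖Λ x‖ ≤ C * ‖x‖) :
    ∃ x, ∀ y, Λ y = B x y := by
  let T : E →L⋆[ℂ] StrongDual ℂ E :=
    (LinearMap.mk₂'ₛₗ (starRingEnd ℂ) (RingHom.id ℂ) (fun x y => conj (B x y))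
      (fun x₁ x₂ y => by simp [(hB.1 y).map_add])
      (fun c x y => by simp [(hB.1 y).map_smul])
      (fun x y₁ y₂ => (hB.2 x).map_add y₁ y₂)
      (fun c x y => (hB.2 x).map_smul c y)).mkContinuous₂ K
      fun x y => by simpa using hK x y
  let f : StrongDual ℂ E :=
    LinearMap.mkContinuous
      { toFun := fun y => conj (Λ y)
        map_add' := fun x y => by simp [hadd]
        map_smul' := fun c x => by simp [hsmul] }
      C fun y => by simpa using hΛ y
  obtain ⟨x, hx⟩ := T.surjective_of_coercive hrefl hγ (fun x => by simpa [T] using hcoer x) f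
  exact ⟨x, fun y => star_injective <| by simpa [T, f] using (DFunLike.congr_fun hx y).symm⟩

namespace BanachModel

attribute [local instance] instGroup instSpace instComplete

variable {V : Type} [AddCommGroup V] [Module ℂ V] {n : V → ℝ}

theorem exists_linearEquiv (M : BanachModel V n) (hn : ∀ x, n x = 0 → x = 0)
    (hM : Surjective M.j) : ∃ e : V ≃ₗ[ℂ] M.E, ∀ x, ‖e x‖ = n x :=
  ⟨LinearEquiv.ofBijective M.j
    ⟨(injective_iff_map_eq_zero M.j).2 fun x hx => hn x (by rw [← M.isometry, hx, norm_zero]),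
      hM⟩, M.isometry⟩

theorem exists_forall_eq_of_coercive (M : BanachModel V n) (hn : ∀ x, n x = 0 → x = 0)
    (hM : Surjective M.j) {B : V → V → ℂ} (hB : IsSesq B) {K : ℝ}
    (hK : ∀ x y, ‖B x y‖ ≤ K * n x * n y) {γ : ℝ} (hγ : 0 < γ)
    (hcoer : ∀ x, γ * n x ^ 2 ≤ ‖B x x‖)
    {Λ : V → ℂ} (hadd : ∀ x y, Λ (x + y) = Λ x + Λ y)
    (hsmul : ∀ (c : ℂ) x, Λ (c • x) = conj c * Λ x)
    {C : ℝ} (hΛ : ∀ x, ‖Λ x‖ ≤ C * n x) :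
    ∃ x, ∀ y, Λ y = B x y := by
  obtain ⟨e, he⟩ := M.exists_linearEquiv hn hM
  have he : ∀ a, n (e.symm a) = ‖a‖ := fun a => by rw [← he, e.apply_symm_apply]
  obtain ⟨a, ha⟩ := Paper.exists_forall_eq_of_coercive M.reflexive (hB.comp e.symm.toLinearMap)
    (fun a b => by simpa only [LinearEquiv.coe_coe, he] using hK (e.symm a) (e.symm b)) hγ
    (fun a => by simpa only [LinearEquiv.coe_coe, he] using hcoer (e.symm a))
    (Λ := fun a => Λ (e.symm a)) (fun a b => by simp [hadd]) (fun c a => by simp [hsmul])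
    (fun a => by simpa only [LinearEquiv.coe_coe, he] using hΛ (e.symm a))
  exact ⟨e.symm a, fun y => by simpa using ha (e y)⟩

end BanachModel

section BoundedOn

variable {H : Type} [NormedAddCommGroup H] [InnerProductSpace ℂ H] {D : Submodule ℂ H}
  {n : D → ℝ}

theorem IsBoundedForm.boundedOn {Υ : H → H → ℂ} (hΥ : IsBoundedForm Υ)
    (hD : EmbedsContinuously D n) : BoundedOn D (fun ξ η => Υ ξ η) n := by
  obtain ⟨-, C, hC⟩ := hΥ
  obtain ⟨α, hα, hemb⟩ := hD
  refine ⟨(|C| + 1) * α ^ 2, by positivity, fun ξ η => ?_⟩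
  have hξη : ‖(ξ : H)‖ * ‖(η : H)‖ ≤ (α * n ξ) * (α * n η) :=
    mul_le_mul (hemb ξ) (hemb η) (norm_nonneg _) ((norm_nonneg _).trans (hemb ξ))
  calc ‖Υ ξ η‖ ≤ C * ‖(ξ : H)‖ * ‖(η : H)‖ := hC ξ η
    _ ≤ (|C| + 1) * (‖(ξ : H)‖ * ‖(η : H)‖) := by
      rw [mul_assoc]
      exact mul_le_mul_of_nonneg_right (by linarith [le_abs_self C]) (by positivity)
    _ ≤ (|C| + 1) * ((α * n ξ) * (α * n η)) := by gcongr
    _ = (|C| + 1) * α ^ 2 * n ξ * n η := by ring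

theorem BoundedOn.add {Ω₁ Ω₂ : D → D → ℂ} (h₁ : BoundedOn D Ω₁ n) (h₂ : BoundedOn D Ω₂ n) :
    BoundedOn D (Ω₁ + Ω₂) n := by
  obtain ⟨β₁, hβ₁, h₁⟩ := h₁
  obtain ⟨β₂, hβ₂, h₂⟩ := h₂
  refine ⟨β₁ + β₂, by positivity, fun ξ η => ?_⟩
  calc ‖Ω₁ ξ η + Ω₂ ξ η‖ ≤ ‖Ω₁ ξ η‖ + ‖Ω₂ ξ η‖ := norm_add_le _ _
    _ ≤ β₁ * n ξ * n η + β₂ * n ξ * n η := add_le_add (h₁ ξ η) (h₂ ξ η)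
    _ = (β₁ + β₂) * n ξ * n η := by ring

end BoundedOn

theorem solvable_of_coercive_general {H : Type} [NormedAddCommGroup H] [InnerProductSpace ℂ H]
    (D : Submodule ℂ H)
    (Ω : ↥D → ↥D → ℂ) (hsesq : IsSesq Ω) (n : ↥D → ℝ) (hq : IsQClosed D Ω n)
    (Υ : H → H → ℂ) (hΥ : IsBoundedForm Υ)
    (hcoer : ∃ γ : ℝ, 0 < γ ∧ ∀ ξ : ↥D, γ * n ξ ^ 2 ≤ ‖Ω ξ ξ + Υ ↑ξ ↑ξ‖) :
    InP0 D Ω n Υ ∧ IsSolvable D Ω n := by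
  have hP0 : InP0 D Ω n Υ := by
    obtain ⟨γ, hγ, hco⟩ := hcoer
    obtain ⟨hn, ⟨hemb, -⟩, ⟨M, hM⟩, hΩ⟩ := hq
    have hn₀ : ∀ ξ, n ξ = 0 → ξ = 0 := fun ξ => (hn.1 ξ).1
    obtain ⟨K, -, hK⟩ := hΩ.add (hΥ.boundedOn hemb)
    refine ⟨fun ξ hξ => hn₀ ξ (eq_zero_of_mul_sq_nonpos hγ (by simpa [hξ ξ] using hco ξ)),
      fun Λ ⟨hadd, hsmul, C, hΛ⟩ => ?_⟩
    exact M.exists_forall_eq_of_coercive hn₀ hM (hsesq.add (hΥ.1.comp D.subtype)) hK hγ hco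
      hadd hsmul hΛ
  exact ⟨hP0, hq, Υ, hΥ, hP0⟩

theorem solvable_of_coercive {H : Type} [NormedAddCommGroup H] [InnerProductSpace ℂ H]
    [CompleteSpace H] (D : Submodule ℂ H) (hD : Dense (D : Set H))
    (Ω : ↥D → ↥D → ℂ) (hsesq : IsSesq Ω) (n : ↥D → ℝ) (hq : IsQClosed D Ω n)
    (Υ : H → H → ℂ) (hΥ : IsBoundedForm Υ)
    (hcoer : ∃ γ : ℝ, 0 < γ ∧ ∀ ξ : ↥D, γ * n ξ ^ 2 ≤ ‖Ω ξ ξ + Υ ↑ξ ↑ξ‖) :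
    InP0 D Ω n Υ ∧ IsSolvable D Ω n :=
  solvable_of_coercive_general D Ω hsesq n hq Υ hΥ hcoer

end Paper
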